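/- arXiv:2203.09672 — 2 statements merged into one kernel-verified Lean document; each statement's English description precedes it below -/
import Mathlib

section
/- In the binary SCM with Z ~ Bernoulli(1/2), P(T=1|Z=1)=ρ_{t1}, P(T=1|Z=0)=ρ_{t0}, P(X=1|Z=1)=ρ_{x1}, P(X=1|Z=0)=ρ_{x0}, Y = T XOR Z (with T ⊥ X | Z), the naive non-causal estimator obtained by adjusting for X instead of Z, namely Ê₁ = ∑_x P(X=x)·P(Y=1|X=x,T=1), satisfies Ê₁ = P(X=1)·ρ_{x0}ρ_{t0}/(ρ_{x1}ρ_{t1}+ρ_{x0}ρ_{t0}) + P(X=0)·(1−ρ_{x0})ρ_{t0}/((1−ρ_{x1})ρ_{t1}+(1−ρ_{x0})ρ_{t0}). -/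
theorem div_sum_eq_of_uniform_prior {Z X T : Type*} [Fintype Z] {c : ℝ} (hc : c ≠ 0)
    (pX : Z → X → ℝ) (pT : Z → T → ℝ) (joint : Z → X → T → ℝ)
    (hjoint : ∀ z x t, joint z x t = c * pX z x * pT z t) (z₀ : Z) (x : X) (t : T) :
    joint z₀ x t / ∑ z, joint z x t = pX z₀ x * pT z₀ t / ∑ z, pX z x * pT z t := by
  simp only [hjoint, mul_assoc, ← Finset.mul_sum]
  exact mul_div_mul_left _ _ hc

theorem naive_estimator_formula_general
    (ρt0 ρt1 ρx0 ρx1 : ℝ)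
    (pX : Bool → Bool → ℝ)
    (hpX : ∀ z x, pX z x = if x then (if z then ρx1 else ρx0) else (1 - if z then ρx1 else ρx0))
    (pT : Bool → Bool → ℝ)
    (hpT : ∀ z t, pT z t = if t then (if z then ρt1 else ρt0) else (1 - if z then ρt1 else ρt0))
    -- joint p(z, x, t) = p(z)·p(x|z)·p(t|z)
    (joint : Bool → Bool → Bool → ℝ)
    (hjoint : ∀ z x t, joint z x t = 1/2 * pX z x * pT z t)
    -- marginal of X
    (pXmarg : Bool → ℝ)
    -- P(Y=1 | X=x, T=1): since Y = T XOR Z, the event {Y=1, T=1} is {Z=0, T=1}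
    (pY1givenXT1 : Bool → ℝ)
    (hpY : ∀ x, pY1givenXT1 x = joint false x true / (∑ z, joint z x true)) :
    ∑ x, pXmarg x * pY1givenXT1 x =
      pXmarg true * (ρx0 * ρt0 / (ρx1 * ρt1 + ρx0 * ρt0)) +
        pXmarg false * ((1 - ρx0) * ρt0 / ((1 - ρx1) * ρt1 + (1 - ρx0) * ρt0)) := by
  have hposterior : ∀ x, pY1givenXT1 x =
      pX false x * pT false true / ∑ z, pX z x * pT z true := fun x => by
    rw [hpY, div_sum_eq_of_uniform_prior (c := 1 / 2) (by norm_num) pX pT joint hjoint]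
  simp only [hposterior, Fintype.sum_bool, hpX, hpT, if_true, Bool.false_eq_true, if_false]

/-- In the binary SCM with `Z ~ Bernoulli(1/2)`, `P(T=1|Z=z)=ρ_t z`, `P(X=1|Z=z)=ρ_x z`,
`Y = T XOR Z` and `T ⊥ X | Z`, the naive non-causal estimator obtained by adjusting for `X`
instead of `Z`, namely `Ê₁ = ∑_x P(X=x)·P(Y=1|X=x,T=1)`, equals
`P(X=1)·ρ_x0 ρ_t0/(ρ_x1 ρ_t1 + ρ_x0 ρ_t0) + P(X=0)·(1−ρ_x0)ρ_t0/((1−ρ_x1)ρ_t1 + (1−ρ_x0)ρ_t0)`. -/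
theorem naive_estimator_formula
    (ρt0 ρt1 ρx0 ρx1 : ℝ)
    (hρt0 : 0 < ρt0 ∧ ρt0 < 1) (hρt1 : 0 < ρt1 ∧ ρt1 < 1)
    (hρx0 : 0 < ρx0 ∧ ρx0 < 1) (hρx1 : 0 < ρx1 ∧ ρx1 < 1)
    (pX : Bool → Bool → ℝ)
    (hpX : ∀ z x, pX z x = if x then (if z then ρx1 else ρx0) else (1 - if z then ρx1 else ρx0))
    (pT : Bool → Bool → ℝ)
    (hpT : ∀ z t, pT z t = if t then (if z then ρt1 else ρt0) else (1 - if z then ρt1 else ρt0))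
    -- joint p(z, x, t) = p(z)·p(x|z)·p(t|z)
    (joint : Bool → Bool → Bool → ℝ)
    (hjoint : ∀ z x t, joint z x t = 1/2 * pX z x * pT z t)
    -- marginal of X
    (pXmarg : Bool → ℝ) (hpXm : ∀ x, pXmarg x = ∑ z, 1/2 * pX z x)
    -- P(Y=1 | X=x, T=1): since Y = T XOR Z, the event {Y=1, T=1} is {Z=0, T=1}
    (pY1givenXT1 : Bool → ℝ)
    (hpY : ∀ x, pY1givenXT1 x = joint false x true / (∑ z, joint z x true)) :
    ∑ x, pXmarg x * pY1givenXT1 x =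
      pXmarg true * (ρx0 * ρt0 / (ρx1 * ρt1 + ρx0 * ρt0)) +
        pXmarg false * ((1 - ρx0) * ρt0 / ((1 - ρx1) * ρt1 + (1 - ρx0) * ρt0)) :=
  naive_estimator_formula_general ρt0 ρt1 ρx0 ρx1 pX hpX pT hpT joint hjoint pXmarg pY1givenXT1 hpY
end

section
/- In the linear structural model of the previous statement, augmented with a proxy W = B_W U + ε_W (ε_W zero-mean, independent of everything else) where B_W is square and invertible and Σ_{UU} is invertible, the causal effect β_{YX} is identified from proxy covariances: β_{YX} = (σ_{XY} − Σ_{XW}(B_W Σ_{UU} B_Wᵀ)⁻¹Σ_{YW}ᵀ)/(σ_{XX} − Σ_{XW}(B_W Σ_{UU} B_Wᵀ)⁻¹Σ_{XW}ᵀ), provided the denominator is nonzero. -/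
open MeasureTheory ProbabilityTheory Matrix

/-- Scalar covariance `Cov(X,Y) = E[(X − E X)(Y − E Y)]`. -/
noncomputable def scov {Ω : Type*} [MeasurableSpace Ω] (μ : Measure Ω)
    (X Y : Ω → ℝ) : ℝ :=
  ∫ ω, (X ω - ∫ ω', X ω' ∂μ) * (Y ω - ∫ ω', Y ω' ∂μ) ∂μ

/-- Row vector of covariances of a scalar with a random vector. -/
noncomputable def scalarVecCov {Ω : Type*} [MeasurableSpace Ω] (μ : Measure Ω) {q : ℕ}
    (X : Ω → ℝ) (W : Ω → Fin q → ℝ) : Fin q → ℝ :=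
  fun j => ∫ ω, (X ω - ∫ ω', X ω' ∂μ) * (W ω j - ∫ ω', W ω' j ∂μ) ∂μ

/-- Covariance matrix of two random vectors. -/
noncomputable def vecCov {Ω : Type*} [MeasurableSpace Ω] (μ : Measure Ω) {a b : ℕ}
    (A : Ω → Fin a → ℝ) (B : Ω → Fin b → ℝ) : Matrix (Fin a) (Fin b) ℝ :=
  fun i j => ∫ ω, (A ω i - ∫ ω', A ω' i ∂μ) * (B ω j - ∫ ω', B ω' j ∂μ) ∂μ

/-!
Covariance is bilinear and vanishes against independent noise, so
`Σ_XW = B_W Σ_XU`, `Σ_YW = B_W Σ_YU`, `Σ_YU = Σ_UU β_YU + β_YX Σ_XU` and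
`σ_XY = β_YUᵀ Σ_XU + β_YX σ_XX`. Since `B_W` is invertible, the factors `B_W` cancel against
`(B_W Σ_UU B_Wᵀ)⁻¹`, which leaves the backdoor-adjusted ratio built from `Σ_UU⁻¹`; its numerator
is `β_YX` times its denominator.
-/

section Covariance

variable {Ω : Type*} [MeasurableSpace Ω] {μ : Measure Ω}

-- `scov`, `scalarVecCov` and `vecCov` are Mathlib's `covariance` up to unfolding; the proofs
-- below use this definitional equality freely.
theorem scalarVecCov_apply {q : ℕ} (X : Ω → ℝ) (W : Ω → Fin q → ℝ) (j : Fin q) :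
    scalarVecCov μ X W j = cov[X, fun ω => W ω j; μ] := rfl

theorem memLp_dotProduct {p : ℕ} {U : Ω → Fin p → ℝ} (hU : ∀ i, MemLp (fun ω => U ω i) 2 μ)
    (c : Fin p → ℝ) : MemLp (fun ω => c ⬝ᵥ U ω) 2 μ :=
  memLp_finsetSum _ fun i _ => (hU i).const_mul (c i)

variable [IsProbabilityMeasure μ]

theorem covariance_dotProduct_right {p : ℕ} {f : Ω → ℝ} {U : Ω → Fin p → ℝ}
    (hf : MemLp f 2 μ) (hU : ∀ i, MemLp (fun ω => U ω i) 2 μ) (c : Fin p → ℝ) :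
    cov[f, fun ω => c ⬝ᵥ U ω; μ] = c ⬝ᵥ scalarVecCov μ f U := by
  simp only [dotProduct, scalarVecCov_apply, ← covariance_const_mul_right]
  exact covariance_fun_sum_right (fun i => (hU i).const_mul (c i)) hf

theorem covariance_dotProduct_add_right {p : ℕ} {f e : Ω → ℝ} {U : Ω → Fin p → ℝ}
    (hf : MemLp f 2 μ) (hU : ∀ i, MemLp (fun ω => U ω i) 2 μ) (he : MemLp e 2 μ)
    (c : Fin p → ℝ) :
    cov[f, fun ω => c ⬝ᵥ U ω + e ω; μ] = c ⬝ᵥ scalarVecCov μ f U + cov[f, e; μ] := by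
  rw [← covariance_dotProduct_right hf hU c]
  exact covariance_add_right hf (memLp_dotProduct hU c) he

theorem scalarVecCov_mulVec_add_of_indepFun {p q : ℕ} {f : Ω → ℝ} {U : Ω → Fin p → ℝ}
    {e : Ω → Fin q → ℝ} (B : Matrix (Fin q) (Fin p) ℝ) (hf : MemLp f 2 μ)
    (hU : ∀ i, MemLp (fun ω => U ω i) 2 μ) (he : ∀ j, MemLp (fun ω => e ω j) 2 μ)
    (hfe : ∀ j, IndepFun f (fun ω => e ω j) μ) :
    scalarVecCov μ f (fun ω => B *ᵥ U ω + e ω) = B *ᵥ scalarVecCov μ f U := by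
  ext j
  rw [scalarVecCov_apply]
  simp only [Pi.add_apply, mulVec]
  rw [covariance_dotProduct_add_right hf hU (he j), (hfe j).covariance_eq_zero hf (he j),
    add_zero]

theorem covariance_linear_right {p : ℕ} {f X Y ε : Ω → ℝ} {U : Ω → Fin p → ℝ} {β : Fin p → ℝ}
    {b : ℝ} (hY : ∀ ω, Y ω = β ⬝ᵥ U ω + b * X ω + ε ω) (hf : MemLp f 2 μ)
    (hU : ∀ i, MemLp (fun ω => U ω i) 2 μ) (hX : MemLp X 2 μ) (hε : MemLp ε 2 μ)
    (hfε : IndepFun f ε μ) :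
    cov[f, Y; μ] = β ⬝ᵥ scalarVecCov μ f U + b * cov[f, X; μ] := by
  have hY' : Y = fun ω => β ⬝ᵥ U ω + ((fun ω => b * X ω) + ε) ω := by
    funext ω; rw [hY, Pi.add_apply, add_assoc]
  rw [hY', covariance_dotProduct_add_right hf hU ((hX.const_mul b).add hε),
    covariance_add_right hf (hX.const_mul b) hε, covariance_const_mul_right,
    hfε.covariance_eq_zero hf hε, add_zero]

end Covariance

theorem dotProduct_mulVec_inv_conj {n : Type*} [Fintype n] [DecidableEq n] {R : Type*}
    [CommRing R] {B : Matrix n n R} (hB : IsUnit B.det) (S : Matrix n n R) (a b : n → R) :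
    B *ᵥ a ⬝ᵥ (B * S * Bᵀ)⁻¹ *ᵥ (B *ᵥ b) = a ⬝ᵥ S⁻¹ *ᵥ b := by
  have hBT : IsUnit Bᵀ.det := by rwa [det_transpose]
  have hconj : Bᵀ * (B * S * Bᵀ)⁻¹ * B = S⁻¹ := by
    rw [Matrix.mul_inv_rev, Matrix.mul_inv_rev, ← Matrix.mul_assoc, mul_nonsing_inv _ hBT,
      Matrix.one_mul, Matrix.mul_assoc, nonsing_inv_mul _ hB, Matrix.mul_one]
  rw [dotProduct_mulVec, dotProduct_mulVec, dotProduct_mulVec, ← vecMul_transpose, vecMul_vecMul,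
    vecMul_vecMul, ← Matrix.mul_assoc, hconj]

-- For `Y = βᵀU + b X + ε`, read `S = Σ_UU`, `a = Σ_XU`, `c = Σ_YU`.
theorem eq_backdoor_adjusted_ratio {n : Type*} [Fintype n] [DecidableEq n] {S : Matrix n n ℝ}
    (hS : IsUnit S.det) {a c β : n → ℝ} {b σXX σXY : ℝ} (hσXY : σXY = β ⬝ᵥ a + b * σXX)
    (hc : c = S *ᵥ β + b • a) (hden : σXX - a ⬝ᵥ S⁻¹ *ᵥ a ≠ 0) :
    b = (σXY - a ⬝ᵥ S⁻¹ *ᵥ c) / (σXX - a ⬝ᵥ S⁻¹ *ᵥ a) := by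
  rw [hσXY, hc, mulVec_add, mulVec_smul, mulVec_mulVec, nonsing_inv_mul _ hS, one_mulVec,
    dotProduct_add, dotProduct_smul, dotProduct_comm a β, smul_eq_mul, eq_div_iff hden]
  ring

theorem proxy_identification_linear_sem_general
    {Ω : Type*} [MeasurableSpace Ω] (μ : Measure Ω) [IsProbabilityMeasure μ] {p : ℕ}
    (U : Ω → Fin p → ℝ) (X Y εX εY : Ω → ℝ) (εW : Ω → Fin p → ℝ)
    (βXU βYU : Fin p → ℝ) (βYX : ℝ) (BW : Matrix (Fin p) (Fin p) ℝ)
    (W : Ω → Fin p → ℝ)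
    (hX : ∀ ω, X ω = βXU ⬝ᵥ U ω + εX ω)
    (hY : ∀ ω, Y ω = βYU ⬝ᵥ U ω + βYX * X ω + εY ω)
    (hWdef : ∀ ω, W ω = BW.mulVec (U ω) + εW ω)
    -- independence and zero means of the noises
    (hindepY : IndepFun (fun ω => (U ω, X ω)) εY μ)
    (hindepW : IndepFun (fun ω => (U ω, X ω, Y ω)) εW μ)
    -- finite second moments
    (hU2 : ∀ i, MemLp (fun ω => U ω i) 2 μ) (hεX2 : MemLp εX 2 μ) (hεY2 : MemLp εY 2 μ)
    (hεW2 : ∀ i, MemLp (fun ω => εW ω i) 2 μ)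
    -- invertibility and nonzero denominator
    (hSigma : IsUnit (vecCov μ U U).det) (hBW : IsUnit BW.det)
    (hden : scov μ X X - scalarVecCov μ X W ⬝ᵥ
        (BW * vecCov μ U U * BWᵀ)⁻¹.mulVec (scalarVecCov μ X W) ≠ 0) :
    βYX =
      (scov μ X Y - scalarVecCov μ X W ⬝ᵥ
          (BW * vecCov μ U U * BWᵀ)⁻¹.mulVec (scalarVecCov μ Y W)) /
        (scov μ X X - scalarVecCov μ X W ⬝ᵥ
          (BW * vecCov μ U U * BWᵀ)⁻¹.mulVec (scalarVecCov μ X W)) := by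
  have hX2 : MemLp X 2 μ := funext hX ▸ (memLp_dotProduct hU2 βXU).add hεX2
  have hY2 : MemLp Y 2 μ :=
    funext hY ▸ ((memLp_dotProduct hU2 βYU).add (hX2.const_mul βYX)).add hεY2
  have hW : W = fun ω => BW *ᵥ U ω + εW ω := funext hWdef
  have hXW : scalarVecCov μ X W = BW *ᵥ scalarVecCov μ X U :=
    hW ▸ scalarVecCov_mulVec_add_of_indepFun BW hX2 hU2 hεW2 fun j =>
      hindepW.comp (measurable_fst.comp measurable_snd) (measurable_pi_apply j)
  have hYW : scalarVecCov μ Y W = BW *ᵥ scalarVecCov μ Y U :=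
    hW ▸ scalarVecCov_mulVec_add_of_indepFun BW hY2 hU2 hεW2 fun j =>
      hindepW.comp (measurable_snd.comp measurable_snd) (measurable_pi_apply j)
  have hXY : scov μ X Y = βYU ⬝ᵥ scalarVecCov μ X U + βYX * scov μ X X :=
    covariance_linear_right hY hX2 hU2 hX2 hεY2 (hindepY.comp measurable_snd measurable_id)
  have hYU : scalarVecCov μ Y U = vecCov μ U U *ᵥ βYU + βYX • scalarVecCov μ X U := by
    ext j
    have hUjεY : IndepFun (fun ω => U ω j) εY μ :=
      hindepY.comp ((measurable_pi_apply j).comp measurable_fst) measurable_id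
    rw [scalarVecCov_apply, covariance_comm,
      covariance_linear_right hY (hU2 j) hU2 hX2 hεY2 hUjεY, covariance_comm, dotProduct_comm]
    rfl
  rw [hXW, dotProduct_mulVec_inv_conj hBW] at hden ⊢
  rw [hYW, dotProduct_mulVec_inv_conj hBW]
  exact eq_backdoor_adjusted_ratio hSigma hXY hYU hden

/-- In the linear structural model `X = β_XUᵀU + ε_X`, `Y = β_YUᵀU + β_YX X + ε_Y`,
augmented with a proxy `W = B_W U + ε_W` (`ε_W` zero-mean, independent of everything else),
where `B_W` is square invertible and `Σ_UU` is invertible, the causal effect `β_YX` is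
identified from proxy covariances:
`β_YX = (σ_XY − Σ_XW (B_W Σ_UU B_Wᵀ)⁻¹ Σ_YWᵀ)/(σ_XX − Σ_XW (B_W Σ_UU B_Wᵀ)⁻¹ Σ_XWᵀ)`,
provided the denominator is nonzero. -/
theorem proxy_identification_linear_sem
    {Ω : Type*} [MeasurableSpace Ω] (μ : Measure Ω) [IsProbabilityMeasure μ] {p : ℕ}
    (U : Ω → Fin p → ℝ) (X Y εX εY : Ω → ℝ) (εW : Ω → Fin p → ℝ)
    (βXU βYU : Fin p → ℝ) (βYX : ℝ) (BW : Matrix (Fin p) (Fin p) ℝ)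
    (W : Ω → Fin p → ℝ)
    (hX : ∀ ω, X ω = βXU ⬝ᵥ U ω + εX ω)
    (hY : ∀ ω, Y ω = βYU ⬝ᵥ U ω + βYX * X ω + εY ω)
    (hWdef : ∀ ω, W ω = BW.mulVec (U ω) + εW ω)
    -- independence and zero means of the noises
    (hindepX : IndepFun U εX μ)
    (hindepY : IndepFun (fun ω => (U ω, X ω)) εY μ)
    (hindepW : IndepFun (fun ω => (U ω, X ω, Y ω)) εW μ)
    (hεX : ∫ ω, εX ω ∂μ = 0) (hεY : ∫ ω, εY ω ∂μ = 0) (hεW : ∀ i, ∫ ω, εW ω i ∂μ = 0)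
    -- finite second moments
    (hU2 : ∀ i, MemLp (fun ω => U ω i) 2 μ) (hεX2 : MemLp εX 2 μ) (hεY2 : MemLp εY 2 μ)
    (hεW2 : ∀ i, MemLp (fun ω => εW ω i) 2 μ)
    -- invertibility and nonzero denominator
    (hSigma : IsUnit (vecCov μ U U).det) (hBW : IsUnit BW.det)
    (hden : scov μ X X - scalarVecCov μ X W ⬝ᵥ
        (BW * vecCov μ U U * BWᵀ)⁻¹.mulVec (scalarVecCov μ X W) ≠ 0) :
    βYX =
      (scov μ X Y - scalarVecCov μ X W ⬝ᵥ
          (BW * vecCov μ U U * BWᵀ)⁻¹.mulVec (scalarVecCov μ Y W)) /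
        (scov μ X X - scalarVecCov μ X W ⬝ᵥ
          (BW * vecCov μ U U * BWᵀ)⁻¹.mulVec (scalarVecCov μ X W)) :=
  proxy_identification_linear_sem_general μ U X Y εX εY εW βXU βYU βYX BW W hX hY hWdef hindepY
    hindepW hU2 hεX2 hεY2 hεW2 hSigma hBW hden
end
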